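/- Let n ≥ 3, θ = 2π/n, m > 0, q_k = (cos kθ, sin kθ) ∈ ℝ² for 1 ≤ k ≤ n, and d₀ = Σ_{k=1}^{n−1} 1/(2 sin(kπ/n)). Then the central + regular n-gon configuration is a central configuration: for every vertex index k (1 ≤ k ≤ n), Σ_{j=1, j≠k}^{n} (q_j − q_k)/|q_j − q_k|³ + m·(0 − q_k)/|q_k|³ = −(d₀/2 + m) q_k, and the gradient at the central body vanishes: Σ_{j=1}^{n} m·(q_j − 0)/|q_j|³ = 0. -/

import Mathlib

open Real Finset

noncomputable section

/-- θ = 2π/n -/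
def theta (n : ℕ) : ℝ := 2 * Real.pi / n

/-- d₀ = Σ_{k=1}^{n−1} 1/(2 sin(kπ/n)) -/
def dzero (n : ℕ) : ℝ := ∑ k ∈ Finset.Icc 1 (n - 1), 1 / (2 * Real.sin (k * Real.pi / n))

/-- The vertex q_k = (cos kθ, sin kθ) of the regular n-gon, as a point of the
Euclidean plane. -/
def qpt (n k : ℕ) : EuclideanSpace ℝ (Fin 2) :=
  (WithLp.equiv 2 (Fin 2 → ℝ)).symm ![Real.cos (k * theta n), Real.sin (k * theta n)]

lemma qpt_apply0 (n k : ℕ) : (qpt n k) 0 = Real.cos (k * theta n) := by simp [qpt]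
lemma qpt_apply1 (n k : ℕ) : (qpt n k) 1 = Real.sin (k * theta n) := by simp [qpt]

lemma norm_qpt (n k : ℕ) : ‖qpt n k‖ = 1 := by
  simp [qpt, EuclideanSpace.norm_eq, Fin.sum_univ_two]

lemma n_theta (n : ℕ) (hn : 0 < n) : (n : ℝ) * theta n = 2 * Real.pi := by
  have : (n : ℝ) ≠ 0 := Nat.cast_ne_zero.2 hn.ne'
  rw [theta]
  field_simp

lemma qpt_add_n (n j : ℕ) (hn : 0 < n) : qpt n (j + n) = qpt n j := by
  have h : ((j + n : ℕ) : ℝ) * theta n = j * theta n + 2 * Real.pi := by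
    push_cast
    rw [add_mul, n_theta n hn]
  unfold qpt
  rw [h, Real.cos_add_two_pi, Real.sin_add_two_pi]

/-- the "sine" sum, equal to d₀/2 -/
lemma sum_h (n : ℕ) (hn : 3 ≤ n) :
    ∑ l ∈ Finset.Icc 1 (n - 1), 1 / (4 * Real.sin (l * Real.pi / n)) = dzero n / 2 := by
  rw [dzero, Finset.sum_div]
  apply Finset.sum_congr rfl
  intro l hl
  have hn0 : 0 < n := by omega
  obtain ⟨hl1, hl2⟩ := Finset.mem_Icc.1 hl
  have h1 : 0 < Real.sin (l * Real.pi / n) := by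
    apply Real.sin_pos_of_pos_of_lt_pi
    · positivity
    · rw [div_lt_iff₀ (by positivity)]
      have : (l : ℝ) < n := by exact_mod_cast (by omega : l < n)
      nlinarith [Real.pi_pos]
  field_simp
  ring

/-- the "cosine" sum vanishes by the symmetry l ↔ n - l -/
lemma sum_g (n : ℕ) (hn : 3 ≤ n) :
    ∑ l ∈ Finset.Icc 1 (n - 1),
      Real.cos (l * Real.pi / n) / (4 * Real.sin (l * Real.pi / n) ^ 2) = 0 := by
  have key : ∀ l ∈ Finset.Icc 1 (n-1), ((n - l : ℕ) : ℝ) * Real.pi / n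
      = Real.pi - l * Real.pi / n := by
    intro l hl
    obtain ⟨hl1, hl2⟩ := Finset.mem_Icc.1 hl
    have h1 : ((n - l : ℕ) : ℝ) = n - l := by
      push_cast [Nat.cast_sub (by omega : l ≤ n)]; ring
    rw [h1]
    have hn0 : (n : ℝ) ≠ 0 := Nat.cast_ne_zero.2 (by omega)
    field_simp
  apply Finset.sum_involution (fun l _ => n - l)
  · intro l hl
    have hl' : n - l ∈ Finset.Icc 1 (n-1) := by
      rw [Finset.mem_Icc] at hl ⊢; omega
    rw [key l hl]
    rw [Real.cos_pi_sub, Real.sin_pi_sub]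
    ring
  · intro l hl hne
    intro h
    apply hne
    have hl' := Finset.mem_Icc.1 hl
    have h2 : 2 * l = n := by omega
    have : (l : ℝ) * Real.pi / n = Real.pi / 2 := by
      have : (n : ℝ) = 2 * l := by exact_mod_cast h2.symm
      rw [this]
      have : (l : ℝ) ≠ 0 := Nat.cast_ne_zero.2 (by omega)
      field_simp
    rw [this, Real.cos_pi_div_two]
    simp
  · intro l hl
    rw [Finset.mem_Icc] at hl ⊢; omega
  · intro l hl
    have hl' := Finset.mem_Icc.1 hl
    omega

end

noncomputable section

lemma sin_beta_pos (n l : ℕ) (hn : 3 ≤ n) (hl : l ∈ Finset.Icc 1 (n-1)) :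
    0 < Real.sin (l * Real.pi / n) := by
  obtain ⟨hl1, hl2⟩ := Finset.mem_Icc.1 hl
  apply Real.sin_pos_of_pos_of_lt_pi
  · have hn0 : (0:ℝ) < n := by exact_mod_cast (by omega : 0 < n)
    have hl0 : (0:ℝ) < l := by exact_mod_cast (by omega : 0 < l)
    positivity
  · rw [div_lt_iff₀ (by exact_mod_cast (by omega : 0 < n))]
    have : (l : ℝ) < n := by exact_mod_cast (by omega : l < n)
    nlinarith [Real.pi_pos]

lemma cos_diff (n k l : ℕ) (hn : 3 ≤ n) :
    Real.cos ((k+l : ℕ) * theta n) - Real.cos (k * theta n)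
      = -2 * Real.sin (k * theta n + l * Real.pi / n) * Real.sin (l * Real.pi / n) := by
  have hn0 : (n : ℝ) ≠ 0 := Nat.cast_ne_zero.2 (by omega)
  rw [Real.cos_sub_cos]
  have e1 : ((k+l : ℕ) * theta n + k * theta n) / 2
      = k * theta n + l * Real.pi / n := by
    push_cast [theta]; field_simp; ring
  have e2 : ((k+l : ℕ) * theta n - k * theta n) / 2 = l * Real.pi / n := by
    push_cast [theta]; field_simp; ring
  rw [e1, e2]

lemma sin_diff (n k l : ℕ) (hn : 3 ≤ n) :
    Real.sin ((k+l : ℕ) * theta n) - Real.sin (k * theta n)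
      = 2 * Real.sin (l * Real.pi / n) * Real.cos (k * theta n + l * Real.pi / n) := by
  have hn0 : (n : ℝ) ≠ 0 := Nat.cast_ne_zero.2 (by omega)
  rw [Real.sin_sub_sin]
  have e1 : ((k+l : ℕ) * theta n + k * theta n) / 2
      = k * theta n + l * Real.pi / n := by
    push_cast [theta]; field_simp; ring
  have e2 : ((k+l : ℕ) * theta n - k * theta n) / 2 = l * Real.pi / n := by
    push_cast [theta]; field_simp; ring
  rw [e1, e2]

lemma norm_diff (n k l : ℕ) (hn : 3 ≤ n) (hl : l ∈ Finset.Icc 1 (n-1)) :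
    ‖qpt n (k+l) - qpt n k‖ = 2 * Real.sin (l * Real.pi / n) := by
  have hs := sin_beta_pos n l hn hl
  set β := l * Real.pi / n
  set a := k * theta n + β
  have h0 : (qpt n (k+l) - qpt n k) 0 = -2 * Real.sin a * Real.sin β := by
    simp only [PiLp.sub_apply, qpt_apply0]
    exact cos_diff n k l hn
  have h1 : (qpt n (k+l) - qpt n k) 1 = 2 * Real.sin β * Real.cos a := by
    simp only [PiLp.sub_apply, qpt_apply1]
    exact sin_diff n k l hn
  rw [EuclideanSpace.norm_eq, Fin.sum_univ_two, h0, h1]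
  have : (-2 * Real.sin a * Real.sin β)^2 + (2 * Real.sin β * Real.cos a)^2
      = (2 * Real.sin β)^2 := by
    nlinarith [Real.sin_sq_add_cos_sq a]
  simp only [Real.norm_eq_abs, sq_abs]
  rw [this, Real.sqrt_sq (by positivity)]

end

noncomputable section

lemma termX (n k l : ℕ) (hn : 3 ≤ n) (hl : l ∈ Finset.Icc 1 (n-1)) :
    (‖qpt n (k+l) - qpt n k‖ ^ 3)⁻¹ * ((qpt n (k+l)) 0 - (qpt n k) 0)
      = (-Real.sin (k * theta n)) * (Real.cos (l * Real.pi / n) / (4 * Real.sin (l * Real.pi / n) ^ 2))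
          + (-Real.cos (k * theta n)) * (1 / (4 * Real.sin (l * Real.pi / n))) := by
  have hs := sin_beta_pos n l hn hl
  rw [norm_diff n k l hn hl]
  simp only [qpt_apply0]
  rw [cos_diff n k l hn, Real.sin_add]
  have h : Real.sin (l * Real.pi / n) ≠ 0 := ne_of_gt hs
  field_simp
  ring

lemma termY (n k l : ℕ) (hn : 3 ≤ n) (hl : l ∈ Finset.Icc 1 (n-1)) :
    (‖qpt n (k+l) - qpt n k‖ ^ 3)⁻¹ * ((qpt n (k+l)) 1 - (qpt n k) 1)
      = Real.cos (k * theta n) * (Real.cos (l * Real.pi / n) / (4 * Real.sin (l * Real.pi / n) ^ 2))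
          + (-Real.sin (k * theta n)) * (1 / (4 * Real.sin (l * Real.pi / n))) := by
  have hs := sin_beta_pos n l hn hl
  rw [norm_diff n k l hn hl]
  simp only [qpt_apply1]
  rw [sin_diff n k l hn, Real.cos_add]
  have h : Real.sin (l * Real.pi / n) ≠ 0 := ne_of_gt hs
  field_simp
  ring

end

noncomputable section

/-- reindexing of the vertex sum: any function of `qpt n j` summed over the other
vertices equals the sum over offsets `l`. -/
lemma reindex (n k : ℕ) (hn : 3 ≤ n) (hk : k ∈ Finset.Icc 1 n)
    (F : EuclideanSpace ℝ (Fin 2) → ℝ) :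
    ∑ j ∈ (Finset.Icc 1 n).erase k, F (qpt n j)
      = ∑ l ∈ Finset.Icc 1 (n-1), F (qpt n (k+l)) := by
  obtain ⟨hk1, hk2⟩ := Finset.mem_Icc.1 hk
  refine (Finset.sum_nbij' (fun l => if k + l ≤ n then k + l else k + l - n)
    (fun j => if k < j then j - k else j + n - k) ?_ ?_ ?_ ?_ ?_).symm
  · intro l hl
    obtain ⟨hl1, hl2⟩ := Finset.mem_Icc.1 hl
    simp only [Finset.mem_erase, Finset.mem_Icc]
    split <;> omega
  · intro j hj
    rw [Finset.mem_erase, Finset.mem_Icc] at hj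
    rw [Finset.mem_Icc]
    split <;> omega
  · intro l hl
    obtain ⟨hl1, hl2⟩ := Finset.mem_Icc.1 hl
    split <;> split <;> omega
  · intro j hj
    rw [Finset.mem_erase, Finset.mem_Icc] at hj
    split <;> split <;> omega
  · intro l hl
    obtain ⟨hl1, hl2⟩ := Finset.mem_Icc.1 hl
    split
    · rfl
    · rename_i h
      have h2 : k + l = (k + l - n) + n := by omega
      conv_lhs => rw [h2, qpt_add_n n _ (by omega : 0 < n)]

lemma sum_exp (n : ℕ) (hn : 3 ≤ n) :
    ∑ j ∈ Finset.Icc 1 n, Complex.exp (j * theta n * Complex.I) = 0 := by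
  set z : ℂ := Complex.exp (theta n * Complex.I) with hz
  have hzj : ∀ j : ℕ, Complex.exp (j * theta n * Complex.I) = z ^ j := by
    intro j
    rw [hz, ← Complex.exp_nat_mul]
    ring_nf
  have hzn : z ^ n = 1 := by
    rw [hz, ← Complex.exp_nat_mul]
    have : (n : ℂ) * (theta n * Complex.I) = 2 * Real.pi * Complex.I := by
      have := n_theta n (by omega)
      push_cast [theta]
      have hn0 : (n : ℂ) ≠ 0 := Nat.cast_ne_zero.2 (by omega)
      field_simp
    rw [this]
    simpa using Complex.exp_two_pi_mul_I
  have hz1 : z ≠ 1 := by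
    intro h
    have hre : z.re = Real.cos (theta n) := by
      rw [hz]
      exact_mod_cast Complex.exp_ofReal_mul_I_re (theta n)
    rw [h] at hre
    have hth : (0:ℝ) < theta n := by
      rw [theta]
      have : (0:ℝ) < n := by exact_mod_cast (by omega : 0 < n)
      positivity
    have hle : theta n ≤ Real.pi := by
      rw [theta, div_le_iff₀ (by exact_mod_cast (by omega : 0 < n))]
      have h3 : (3:ℝ) ≤ n := by exact_mod_cast hn
      nlinarith [Real.pi_pos]
    have h1 : Real.cos (theta n) < 1 := by
      have := Real.cos_lt_cos_of_nonneg_of_le_pi le_rfl hle hth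
      simpa using this
    rw [← hre] at h1
    simp at h1
  calc ∑ j ∈ Finset.Icc 1 n, Complex.exp (j * theta n * Complex.I)
      = ∑ j ∈ Finset.Icc 1 n, z ^ j := by
        exact Finset.sum_congr rfl fun j _ => hzj j
    _ = ∑ j ∈ Finset.range n, z ^ (1 + j) := by
        rw [← Finset.Ico_add_one_right_eq_Icc, Finset.sum_Ico_eq_sum_range]
        simp
    _ = z * ∑ j ∈ Finset.range n, z ^ j := by
        rw [Finset.mul_sum]
        exact Finset.sum_congr rfl fun j _ => by rw [pow_add, pow_one]
    _ = 0 := by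
        rw [geom_sum_eq hz1, hzn]
        simp

lemma sum_cos (n : ℕ) (hn : 3 ≤ n) :
    ∑ j ∈ Finset.Icc 1 n, Real.cos (j * theta n) = 0 := by
  have h := sum_exp n hn
  have : ∑ j ∈ Finset.Icc 1 n, Real.cos (j * theta n)
      = (∑ j ∈ Finset.Icc 1 n, Complex.exp (j * theta n * Complex.I)).re := by
    rw [Complex.re_sum]
    apply Finset.sum_congr rfl
    intro j _
    have : ((j : ℂ) * theta n * Complex.I) = ((j * theta n : ℝ) : ℂ) * Complex.I := by
      push_cast; ring
    rw [this, Complex.exp_ofReal_mul_I_re]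
  rw [this, h, Complex.zero_re]

lemma sum_sin (n : ℕ) (hn : 3 ≤ n) :
    ∑ j ∈ Finset.Icc 1 n, Real.sin (j * theta n) = 0 := by
  have h := sum_exp n hn
  have : ∑ j ∈ Finset.Icc 1 n, Real.sin (j * theta n)
      = (∑ j ∈ Finset.Icc 1 n, Complex.exp (j * theta n * Complex.I)).im := by
    rw [Complex.im_sum]
    apply Finset.sum_congr rfl
    intro j _
    have : ((j : ℂ) * theta n * Complex.I) = ((j * theta n : ℝ) : ℂ) * Complex.I := by
      push_cast; ring
    rw [this, Complex.exp_ofReal_mul_I_im]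
  rw [this, h, Complex.zero_im]

end

noncomputable section

lemma sumX (n k : ℕ) (hn : 3 ≤ n) (hk : k ∈ Finset.Icc 1 n) :
    ∑ j ∈ (Finset.Icc 1 n).erase k,
        (‖qpt n j - qpt n k‖ ^ 3)⁻¹ * ((qpt n j) 0 - (qpt n k) 0)
      = -(dzero n / 2) * Real.cos (k * theta n) := by
  rw [reindex n k hn hk
    (fun v => (‖v - qpt n k‖ ^ 3)⁻¹ * (v 0 - (qpt n k) 0))]
  rw [Finset.sum_congr rfl (fun l hl => termX n k l hn hl)]
  rw [Finset.sum_add_distrib, ← Finset.mul_sum, ← Finset.mul_sum,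
    sum_g n hn, sum_h n hn]
  ring

lemma sumY (n k : ℕ) (hn : 3 ≤ n) (hk : k ∈ Finset.Icc 1 n) :
    ∑ j ∈ (Finset.Icc 1 n).erase k,
        (‖qpt n j - qpt n k‖ ^ 3)⁻¹ * ((qpt n j) 1 - (qpt n k) 1)
      = -(dzero n / 2) * Real.sin (k * theta n) := by
  rw [reindex n k hn hk
    (fun v => (‖v - qpt n k‖ ^ 3)⁻¹ * (v 1 - (qpt n k) 1))]
  rw [Finset.sum_congr rfl (fun l hl => termY n k l hn hl)]
  rw [Finset.sum_add_distrib, ← Finset.mul_sum, ← Finset.mul_sum,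
    sum_g n hn, sum_h n hn]
  ring


/-- the central + regular n-gon configuration is a central configuration:
for every vertex k, Σ_{j≠k} (q_j − q_k)/|q_j − q_k|³ + m(0 − q_k)/|q_k|³
= −(d₀/2 + m) q_k, and the gradient at the central body vanishes:
Σ_{j=1}^{n} m q_j/|q_j|³ = 0. -/
theorem central_configuration (n : ℕ) (hn : 3 ≤ n) (m : ℝ) (hm : 0 < m) :
    (∀ k ∈ Finset.Icc 1 n,
      (∑ j ∈ (Finset.Icc 1 n).erase k, (‖qpt n j - qpt n k‖ ^ 3)⁻¹ • (qpt n j - qpt n k))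
        + m • ((‖qpt n k‖ ^ 3)⁻¹ • ((0 : EuclideanSpace ℝ (Fin 2)) - qpt n k))
      = (-(dzero n / 2 + m)) • qpt n k)
    ∧ (∑ j ∈ Finset.Icc 1 n, m • ((‖qpt n j‖ ^ 3)⁻¹ • qpt n j))
        = (0 : EuclideanSpace ℝ (Fin 2)) := by
  constructor
  · intro k hk
    ext i
    rw [PiLp.add_apply, WithLp.ofLp_sum, Finset.sum_apply]
    simp only [PiLp.smul_apply, PiLp.sub_apply, PiLp.zero_apply, smul_eq_mul,
      norm_qpt, one_pow, inv_one]
    fin_cases i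
    · dsimp only
      simp only [Fin.mk_zero, Fin.mk_one]
      rw [sumX n k hn hk, qpt_apply0]
      ring
    · dsimp only
      simp only [Fin.mk_zero, Fin.mk_one]
      rw [sumY n k hn hk, qpt_apply1]
      ring
  · ext i
    rw [WithLp.ofLp_sum, Finset.sum_apply]
    simp only [PiLp.smul_apply, PiLp.zero_apply, smul_eq_mul,
      norm_qpt, one_pow, inv_one, one_mul]
    rw [← Finset.mul_sum]
    fin_cases i
    · dsimp only
      simp only [Fin.mk_zero, Fin.mk_one, qpt_apply0]
      rw [sum_cos n hn]
      ring
    · dsimp only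
      simp only [Fin.mk_zero, Fin.mk_one, qpt_apply1]
      rw [sum_sin n hn]
      ring

end
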